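/- Wasserstein separation from a rotating measure: let h ∈ P(S²) be a probability density on the sphere with ∫_{S²} ξ₂ h(ξ) dξ > 0, let M be the skew-symmetric matrix with Mv = e₃ ∧ v, and c̄ > 0. Define f(t) = (uniform)⊗h and f̄(t) = (uniform)⊗(h∘e^{−(c̄/2)Mt}) on 𝕋×S². Then there exist c, T > 0 such that W₁(f(t), f̄(t)) ≥ ct for all t ∈ [0,T]. In fact, g(t) := ∫_{S²}(ξ₁ − (e^{(c̄/2)Mt}ξ)₁) h(ξ)dξ is a lower bound for W₁(f(t),f̄(t)) via the 1-Lipschitz test function φ(x,ξ) = ξ₁, and g(0) = 0, g'(0) = (c̄/2)∫ ξ₂ h dξ > 0. -/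

import Mathlib

open MeasureTheory Real Set
open scoped BigOperators ENNReal

noncomputable section

abbrev E3 := EuclideanSpace ℝ (Fin 3)

/-- The torus `𝕋 = (ℝ/ℤ)³`. -/
abbrev T3 := Fin 3 → AddCircle (1 : ℝ)

/-- Rotation by angle `s` about `e₃`, i.e. `e^{sM}` for `M = [[0,−1,0],[1,0,0],[0,0,0]]`. -/
def rot (s : ℝ) (ξ : E3) : E3 :=
  (WithLp.equiv 2 (Fin 3 → ℝ)).symm
    ![ξ 0 * Real.cos s - ξ 1 * Real.sin s, ξ 0 * Real.sin s + ξ 1 * Real.cos s, ξ 2]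

/-- Surface measure on the unit sphere `S² ⊂ ℝ³`. -/
def sphMeas : Measure E3 := μH[2].restrict (Metric.sphere (0 : E3) 1)

/-- The 1-Wasserstein distance via Kantorovich duality. -/
def W1 {X : Type*} [PseudoMetricSpace X] [MeasurableSpace X] (μ ν : Measure X) : ℝ :=
  sSup {r | ∃ φ : X → ℝ, LipschitzWith 1 φ ∧ r = (∫ x, φ x ∂μ) - ∫ x, φ x ∂ν}

/-- The measure on `𝕋 × S²` which is uniform in space with orientational density `h`. -/
def prodMeas (h : E3 → ℝ) : Measure (T3 × E3) :=
  (volume : Measure T3).prod (sphMeas.withDensity fun ξ => ENNReal.ofReal (h ξ))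

/-!
Testing the Kantorovich dual against the 1-Lipschitz function `φ(x, ξ) = ξ₁`, and moving the
rotation from the density onto `φ` by the rotation invariance of the surface measure, gives
`W₁(f(t), f̄(t)) ≥ g(t)` with `g(t) = (1 - cos (c̄t/2)) ∫ ξ₁ h + sin (c̄t/2) ∫ ξ₂ h`. Both measures
live on the bounded set `𝕋 × S²`, so the dual supremum is finite. Since `g(0) = 0` and
`g'(0) = (c̄/2) ∫ ξ₂ h > 0`, the function `g` dominates `ct` near `0⁺` for `c = g'(0)/2`.
-/

open Filter Topology

section Wasserstein

variable {X : Type*} [PseudoMetricSpace X] [MeasurableSpace X] [OpensMeasurableSpace X]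

lemma abs_integral_sub_le_of_lipschitzWith_one {μ : Measure X} [IsProbabilityMeasure μ]
    {φ : X → ℝ} (hφ : LipschitzWith 1 φ) {x₀ : X} {r : ℝ} (hμ : ∀ᵐ x ∂μ, dist x x₀ ≤ r) :
    |∫ x, φ x ∂μ - φ x₀| ≤ r := by
  have hbound : ∀ᵐ x ∂μ, ‖φ x - φ x₀‖ ≤ r := by
    filter_upwards [hμ] with x hx
    simpa [Real.norm_eq_abs, ← Real.dist_eq] using
      (hφ.dist_le_mul x x₀).trans (by simpa using hx)
  have hint : Integrable (fun x => φ x - φ x₀) μ :=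
    .of_bound (hφ.continuous.aestronglyMeasurable.sub aestronglyMeasurable_const) r hbound
  have hsub : ∫ x, φ x ∂μ - φ x₀ = ∫ x, (φ x - φ x₀) ∂μ := by
    have hφint : Integrable φ μ :=
      (hint.add (integrable_const (φ x₀))).congr (ae_of_all _ fun x => sub_add_cancel _ _)
    rw [integral_sub hφint (integrable_const _),
      integral_const, probReal_univ, one_smul]
  simpa [hsub, Real.norm_eq_abs] using norm_integral_le_of_norm_le_const hbound

lemma integral_sub_integral_le_W1 {μ ν : Measure X} [IsProbabilityMeasure μ]
    [IsProbabilityMeasure ν] {S : Set X} (hS : Bornology.IsBounded S) (hμ : ∀ᵐ x ∂μ, x ∈ S)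
    (hν : ∀ᵐ x ∂ν, x ∈ S) {φ : X → ℝ} (hφ : LipschitzWith 1 φ) :
    ∫ x, φ x ∂μ - ∫ x, φ x ∂ν ≤ W1 μ ν := by
  obtain ⟨x₀, -⟩ := hμ.exists
  obtain ⟨r, hr⟩ := hS.subset_closedBall x₀
  have hdist {ρ : Measure X} (hρ : ∀ᵐ x ∂ρ, x ∈ S) : ∀ᵐ x ∂ρ, dist x x₀ ≤ r := by
    filter_upwards [hρ] with x hx using hr hx
  refine le_csSup ⟨2 * r, ?_⟩ ⟨φ, hφ, rfl⟩
  rintro _ ⟨ψ, hψ, rfl⟩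
  have hμr := abs_integral_sub_le_of_lipschitzWith_one hψ (hdist hμ)
  have hνr := abs_integral_sub_le_of_lipschitzWith_one hψ (hdist hν)
  linarith [le_abs_self (∫ x, ψ x ∂μ - ψ x₀), neg_abs_le (∫ x, ψ x ∂ν - ψ x₀)]

end Wasserstein

lemma PiLp.lipschitzWith_one_apply {ι : Type*} [Fintype ι] {p : ℝ≥0∞} [Fact (1 ≤ p)]
    {β : ι → Type*} [∀ i, PseudoMetricSpace (β i)] (i : ι) :
    LipschitzWith 1 fun x : PiLp p β => x i :=
  .of_dist_le_mul fun x y => by simpa using PiLp.dist_apply_le x y i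

lemma exists_pos_mul_le_of_hasDerivAt {g : ℝ → ℝ} {d : ℝ} (hg : HasDerivAt g d 0)
    (hg0 : g 0 = 0) (hd : 0 < d) : ∃ c > 0, ∃ T > 0, ∀ t ∈ Icc (0 : ℝ) T, c * t ≤ g t := by
  have hslope : ∀ᶠ t in 𝓝[>] 0, d / 2 < slope g 0 t :=
    (hasDerivAt_iff_tendsto_slope.1 hg |>.mono_left (nhdsGT_le_nhdsNE 0)).eventually
      (lt_mem_nhds (by linarith))
  obtain ⟨ε, hε, hεslope⟩ := mem_nhdsGT_iff_exists_Ioo_subset.1 hslope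
  refine ⟨d / 2, by positivity, ε / 2, half_pos hε, fun t ⟨ht0, htε⟩ => ?_⟩
  rcases ht0.eq_or_lt with rfl | ht0
  · simp [hg0]
  have : d / 2 < slope g 0 t := hεslope ⟨ht0, by linarith⟩
  rw [slope_def_field, hg0, sub_zero, sub_zero, lt_div_iff₀ ht0] at this
  exact this.le

lemma hasDerivAt_one_sub_cos_mul_add_sin_mul (k A B : ℝ) :
    HasDerivAt (fun t => (1 - cos (k * t)) * A + sin (k * t) * B) (k * B) 0 := by
  have hlin : HasDerivAt (fun t => k * t) k 0 := by
    simpa using (hasDerivAt_id (0 : ℝ)).const_mul k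
  exact (((hlin.cos.const_sub 1).mul_const A).add (hlin.sin.mul_const B)).congr_deriv (by simp)

section Rotation

@[simp] lemma rot_apply_zero (s : ℝ) (ξ : E3) : rot s ξ 0 = ξ 0 * cos s - ξ 1 * sin s := rfl
@[simp] lemma rot_apply_one (s : ℝ) (ξ : E3) : rot s ξ 1 = ξ 0 * sin s + ξ 1 * cos s := rfl
@[simp] lemma rot_apply_two (s : ℝ) (ξ : E3) : rot s ξ 2 = ξ 2 := rfl

lemma rot_neg_rot (s : ℝ) (ξ : E3) : rot (-s) (rot s ξ) = ξ := by
  ext i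
  fin_cases i
  · simp only [Fin.zero_eta, rot_apply_zero, rot_apply_one, cos_neg, sin_neg]
    linear_combination ξ 0 * sin_sq_add_cos_sq s
  · simp only [Fin.mk_one, rot_apply_zero, rot_apply_one, cos_neg, sin_neg]
    linear_combination ξ 1 * sin_sq_add_cos_sq s
  · rfl

lemma dist_rot (s : ℝ) (ξ η : E3) : dist (rot s ξ) (rot s η) = dist ξ η := by
  simp only [EuclideanSpace.dist_eq, Fin.sum_univ_three, Real.dist_eq, sq_abs, rot_apply_zero,
    rot_apply_one, rot_apply_two]
  congr 1
  linear_combination ((ξ 0 - η 0) ^ 2 + (ξ 1 - η 1) ^ 2) * sin_sq_add_cos_sq s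

def rotIsometryEquiv (s : ℝ) : E3 ≃ᵢ E3 where
  toFun := rot s
  invFun := rot (-s)
  left_inv := rot_neg_rot s
  right_inv ξ := by simpa using rot_neg_rot (-s) ξ
  isometry_toFun := Isometry.of_dist_eq (dist_rot s)

@[simp] lemma coe_rotIsometryEquiv (s : ℝ) : ⇑(rotIsometryEquiv s) = rot s := rfl

lemma rot_zero (s : ℝ) : rot s 0 = 0 := by
  ext i; fin_cases i <;> simp

lemma norm_rot (s : ℝ) (ξ : E3) : ‖rot s ξ‖ = ‖ξ‖ := by
  simpa [rot_zero] using dist_rot s ξ 0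

lemma measurePreserving_rot (s : ℝ) : MeasurePreserving (rot s) sphMeas sphMeas := by
  have hsphere : rot s ⁻¹' Metric.sphere (0 : E3) 1 = Metric.sphere 0 1 := by
    ext ξ; simp [norm_rot]
  have := ((rotIsometryEquiv s).measurePreserving_hausdorffMeasure 2).restrict_preimage
    Metric.isClosed_sphere.measurableSet (s := Metric.sphere (0 : E3) 1)
  rwa [coe_rotIsometryEquiv, hsphere] at this

lemma integral_comp_rot (s : ℝ) (f : E3 → ℝ) : ∫ ξ, f (rot s ξ) ∂sphMeas = ∫ ξ, f ξ ∂sphMeas :=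
  (measurePreserving_rot s).integral_comp (rotIsometryEquiv s).toHomeomorph.measurableEmbedding f

end Rotation

section ProductMeasure

instance : IsProbabilityMeasure (volume : Measure (AddCircle (1 : ℝ))) :=
  ⟨by simp [AddCircle.measure_univ]⟩

lemma ae_mem_univ_prod_sphere (h : E3 → ℝ) :
    ∀ᵐ z ∂prodMeas h, z ∈ (univ : Set T3) ×ˢ Metric.sphere (0 : E3) 1 := by
  have hsph : ∀ᵐ ξ ∂sphMeas.withDensity fun ξ => ENNReal.ofReal (h ξ),
      ξ ∈ Metric.sphere (0 : E3) 1 :=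
    withDensity_absolutelyContinuous _ _ (ae_restrict_mem Metric.isClosed_sphere.measurableSet)
  unfold prodMeas
  simpa using Measure.quasiMeasurePreserving_snd.ae hsph

variable {h : E3 → ℝ} (hnonneg : ∀ ξ, 0 ≤ h ξ) (hprob : ∫ ξ, h ξ ∂sphMeas = 1)
include hnonneg hprob

lemma isProbabilityMeasure_withDensity_sphMeas :
    IsProbabilityMeasure (sphMeas.withDensity fun ξ => ENNReal.ofReal (h ξ)) := by
  have hint : Integrable h sphMeas := .of_integral_ne_zero (by simp [hprob])
  constructor
  rw [withDensity_apply _ MeasurableSet.univ, Measure.restrict_univ,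
    ← ofReal_integral_eq_lintegral_ofReal hint (ae_of_all _ hnonneg), hprob, ENNReal.ofReal_one]

lemma isProbabilityMeasure_prodMeas : IsProbabilityMeasure (prodMeas h) :=
  have := isProbabilityMeasure_withDensity_sphMeas hnonneg hprob
  inferInstanceAs (IsProbabilityMeasure (volume.prod _))

lemma integral_comp_snd_prodMeas (hh : Measurable h) (f : E3 → ℝ) :
    ∫ z, f z.2 ∂prodMeas h = ∫ ξ, f ξ * h ξ ∂sphMeas := by
  have := isProbabilityMeasure_withDensity_sphMeas hnonneg hprob
  rw [prodMeas, integral_fun_snd, probReal_univ, one_smul,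
    integral_withDensity_eq_integral_toReal_smul hh.ennreal_ofReal
      (ae_of_all _ fun _ => ENNReal.ofReal_lt_top)]
  simp [ENNReal.toReal_ofReal (hnonneg _), mul_comm]

end ProductMeasure

lemma integrable_mul_of_abs_le_norm {g h : E3 → ℝ} (hg : Continuous g)
    (hbound : ∀ ξ, |g ξ| ≤ ‖ξ‖) (hh : Integrable h sphMeas) :
    Integrable (fun ξ => g ξ * h ξ) sphMeas :=
  hh.bdd_mul (c := 1) hg.aestronglyMeasurable <| by
    filter_upwards [ae_restrict_mem Metric.isClosed_sphere.measurableSet] with ξ hξ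
    simpa [mem_sphere_zero_iff_norm.1 hξ] using hbound ξ

section RotationGap

variable {h : E3 → ℝ} (hh : Integrable h sphMeas)
include hh

lemma integrable_apply_mul (i : Fin 3) : Integrable (fun ξ : E3 => ξ i * h ξ) sphMeas :=
  integrable_mul_of_abs_le_norm (PiLp.lipschitzWith_one_apply i).continuous
    (fun ξ => PiLp.norm_apply_le ξ i) hh

lemma integrable_rot_apply_mul (s : ℝ) (i : Fin 3) :
    Integrable (fun ξ => rot s ξ i * h ξ) sphMeas :=
  integrable_mul_of_abs_le_norm
    ((PiLp.lipschitzWith_one_apply i).continuous.comp (rotIsometryEquiv s).continuous)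
    (fun ξ => (PiLp.norm_apply_le (rot s ξ) i).trans_eq (norm_rot s ξ)) hh

lemma integral_apply_sub_rot_apply_mul (s : ℝ) :
    ∫ ξ, (ξ 0 - rot s ξ 0) * h ξ ∂sphMeas
      = (1 - cos s) * ∫ ξ, ξ 0 * h ξ ∂sphMeas + sin s * ∫ ξ, ξ 1 * h ξ ∂sphMeas := by
  rw [← integral_const_mul, ← integral_const_mul,
    ← integral_add ((integrable_apply_mul hh 0).const_mul _)
      ((integrable_apply_mul hh 1).const_mul _)]
  congr 1 with ξ
  simp only [rot_apply_zero]
  ring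

end RotationGap

lemma integral_apply_sub_rot_apply_mul_le_W1 {h : E3 → ℝ} (hh : Measurable h)
    (hnonneg : ∀ ξ, 0 ≤ h ξ) (hprob : ∫ ξ, h ξ ∂sphMeas = 1) (s : ℝ) :
    ∫ ξ, (ξ 0 - rot s ξ 0) * h ξ ∂sphMeas
      ≤ W1 (prodMeas h) (prodMeas fun ξ => h (rot (-s) ξ)) := by
  have hint : Integrable h sphMeas := .of_integral_ne_zero (by simp [hprob])
  have hprob_rot : ∫ ξ, h (rot (-s) ξ) ∂sphMeas = 1 := by rw [integral_comp_rot, hprob]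
  have := isProbabilityMeasure_prodMeas hnonneg hprob
  have := isProbabilityMeasure_prodMeas (fun ξ => hnonneg _) hprob_rot
  have hbdd : Bornology.IsBounded ((univ : Set T3) ×ˢ Metric.sphere (0 : E3) 1) :=
    (isCompact_univ.prod (isCompact_sphere 0 1)).isBounded
  have hrot : ∫ ξ, ξ 0 * h (rot (-s) ξ) ∂sphMeas = ∫ ξ, rot s ξ 0 * h ξ ∂sphMeas := by
    simpa only [rot_neg_rot] using (integral_comp_rot s fun ξ => ξ 0 * h (rot (-s) ξ)).symm
  have hlip : LipschitzWith 1 fun z : T3 × E3 => z.2 0 := by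
    have := (PiLp.lipschitzWith_one_apply 0).comp (LipschitzWith.prod_snd (α := T3) (β := E3))
    rwa [mul_one] at this
  have hW := integral_sub_integral_le_W1 hbdd (ae_mem_univ_prod_sphere h)
    (ae_mem_univ_prod_sphere fun ξ => h (rot (-s) ξ)) hlip
  rw [integral_comp_snd_prodMeas hnonneg hprob hh (· 0),
    integral_comp_snd_prodMeas (fun ξ => hnonneg _) hprob_rot
      (hh.comp (rotIsometryEquiv (-s)).continuous.measurable) (· 0),
    hrot, ← integral_sub (integrable_apply_mul hint 0) (integrable_rot_apply_mul hint s 0)] at hW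
  simpa only [sub_mul] using hW

/-- for `f(t) = uniform ⊗ h` and `f̄(t) = uniform ⊗ (h ∘ e^{−(c̄/2)Mt})`,
the quantity `g(t) = ∫ (ξ₁ − (e^{(c̄/2)Mt}ξ)₁) h dξ` is a lower bound for
`W₁(f(t), f̄(t))`, and there are `c, T > 0` with `W₁(f(t), f̄(t)) ≥ ct` on `[0,T]`. -/
theorem stmt17 (cbar : ℝ) (hcbar : 0 < cbar) (h : E3 → ℝ) (hcont : Continuous h)
    (hnonneg : ∀ ξ, 0 ≤ h ξ)
    (hprob : ∫ ξ in Metric.sphere (0 : E3) 1, h ξ ∂μH[2] = 1)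
    (hmom : 0 < ∫ ξ in Metric.sphere (0 : E3) 1, ξ 1 * h ξ ∂μH[2]) :
    (∀ t : ℝ, 0 ≤ t →
      (∫ ξ in Metric.sphere (0 : E3) 1, (ξ 0 - rot (cbar / 2 * t) ξ 0) * h ξ ∂μH[2])
        ≤ W1 (prodMeas h) (prodMeas fun ξ => h (rot (-(cbar / 2) * t) ξ))) ∧
    ∃ c > (0:ℝ), ∃ T > (0:ℝ), ∀ t ∈ Icc (0:ℝ) T,
      c * t ≤ W1 (prodMeas h) (prodMeas fun ξ => h (rot (-(cbar / 2) * t) ξ)) := by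
  have hint : Integrable h sphMeas := .of_integral_ne_zero (by simp [sphMeas, hprob])
  have hgap (t : ℝ) :
      ∫ ξ in Metric.sphere (0 : E3) 1, (ξ 0 - rot (cbar / 2 * t) ξ 0) * h ξ ∂μH[2]
        ≤ W1 (prodMeas h) (prodMeas fun ξ => h (rot (-(cbar / 2) * t) ξ)) := by
    rw [neg_mul]
    exact integral_apply_sub_rot_apply_mul_le_W1 hcont.measurable hnonneg hprob (cbar / 2 * t)
  obtain ⟨c, hc, T, hT, hle⟩ := exists_pos_mul_le_of_hasDerivAt
    (hasDerivAt_one_sub_cos_mul_add_sin_mul (cbar / 2)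
      (∫ ξ, ξ 0 * h ξ ∂sphMeas) (∫ ξ, ξ 1 * h ξ ∂sphMeas))
    (by simp) (mul_pos (half_pos hcbar) hmom)
  refine ⟨fun t _ => hgap t, c, hc, T, hT, fun t ht => (hle t ht).trans ?_⟩
  rw [← integral_apply_sub_rot_apply_mul hint]
  exact hgap t
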